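/- arXiv:2509.23394 — 3 statements merged into one kernel-verified Lean document; each statement's English description precedes it below -/
import Mathlib

section
/- Let B be a bidirected graph rooted at r, and let C be a nontrivial connected component of the subgraph of B induced by the trail-undirectable edges, with r not a vertex of C. Then there is exactly one trail-directable edge f of B whose natural orientation has its head in C. -/
/-- A bidirected graph: a loopless multigraph together with a signing of each
half-edge (edge-endpoint incidence) by a sign (`true` = `+`, `false` = `-`). -/
structure BidirGraph (V : Type) (E : Type) where
  ends : E → V × V
  sign : E → V → Bool
  loopless : ∀ e : E, (ends e).1 ≠ (ends e).2

namespace BidirGraph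

variable {V E : Type}

/-- The head of an oriented edge `(e, b)`: `b = true` orients `e` from its first
endpoint to its second endpoint. -/
def ohead (B : BidirGraph V E) (oe : E × Bool) : V :=
  if oe.2 then (B.ends oe.1).2 else (B.ends oe.1).1

/-- The tail of an oriented edge. -/
def otail (B : BidirGraph V E) (oe : E × Bool) : V :=
  if oe.2 then (B.ends oe.1).1 else (B.ends oe.1).2

/-- `e` is incident with `v`. -/
def Incident (B : BidirGraph V E) (e : E) (v : V) : Prop :=
  (B.ends e).1 = v ∨ (B.ends e).2 = v

/-- `L` is a trail starting at `v`: a sequence of oriented edges, with no repeated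
underlying edge, consecutive edges sharing a vertex at which they have opposite signs. -/
def IsTrailFrom (B : BidirGraph V E) (v : V) (L : List (E × Bool)) : Prop :=
  (L.map Prod.fst).Nodup ∧
  (∀ oe ∈ L.head?, B.otail oe = v) ∧
  L.Chain' (fun a b => B.ohead a = B.otail b ∧ B.sign a.1 (B.ohead a) ≠ B.sign b.1 (B.ohead a))

/-- The final vertex of a trail starting at `v`. -/
def trailEnd (B : BidirGraph V E) (v : V) (L : List (E × Bool)) : V :=
  match L.getLast? with
  | none => v
  | some oe => B.ohead oe

/-- The internal vertices of a trail: the heads of all edges except the last one. -/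
def Internal (B : BidirGraph V E) (L : List (E × Bool)) : List V :=
  (L.map B.ohead).dropLast

/-- An `r`-trail: a trail starting at `r` with no internal vertex equal to `r`. -/
def IsRTrail (B : BidirGraph V E) (r : V) (L : List (E × Bool)) : Prop :=
  B.IsTrailFrom r L ∧ ∀ v ∈ B.Internal L, v ≠ r

/-- The trail `L` ends at vertex `w` with sign `α`. -/
def EndsAtSigned (B : BidirGraph V E) (L : List (E × Bool)) (w : V) (α : Bool) : Prop :=
  ∃ oe, L.getLast? = some oe ∧ B.ohead oe = w ∧ B.sign oe.1 w = α

/-- A path: a trail with no repeated vertex. -/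
def IsPathFrom (B : BidirGraph V E) (v : V) (L : List (E × Bool)) : Prop :=
  B.IsTrailFrom v L ∧ (v :: L.map B.ohead).Nodup

/-- An almost path: a trail that is trivial or becomes a path after removing its last edge. -/
def IsAlmostPathFrom (B : BidirGraph V E) (v : V) (L : List (E × Bool)) : Prop :=
  B.IsTrailFrom v L ∧ (v :: B.Internal L).Nodup

/-- An edge is trail-undirectable if there are `r`-trails ending in both of its orientations. -/
def TrailUndirectable (B : BidirGraph V E) (r : V) (e : E) : Prop :=
  (∃ L, B.IsRTrail r L ∧ L.getLast? = some (e, true)) ∧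
  (∃ L, B.IsRTrail r L ∧ L.getLast? = some (e, false))

/-- `(e, b)` is the natural orientation of the trail-directable edge `e`: `r`-trails end
in the orientation `(e, b)` but not in the opposite orientation. -/
def NatOrient (B : BidirGraph V E) (r : V) (e : E) (b : Bool) : Prop :=
  (∃ L, B.IsRTrail r L ∧ L.getLast? = some (e, b)) ∧
  ¬ ∃ L, B.IsRTrail r L ∧ L.getLast? = some (e, !b)

/-- An edge is trail-directable if exactly one of its orientations is the final oriented
edge of some `r`-trail. -/
def TrailDirectable (B : BidirGraph V E) (r : V) (e : E) : Prop :=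
  ∃ b, B.NatOrient r e b

/-- `B` is trail-reachable: every edge is the final edge of some `r`-trail. -/
def TrailReachable (B : BidirGraph V E) (r : V) : Prop :=
  ∀ e : E, ∃ L b, B.IsRTrail r L ∧ L.getLast? = some (e, b)

/-- Adjacency of trail-undirectable edges: both undirectable and sharing an endpoint. -/
def UStep (B : BidirGraph V E) (r : V) (a b : E) : Prop :=
  B.TrailUndirectable r a ∧ B.TrailUndirectable r b ∧ ∃ v, B.Incident a v ∧ B.Incident b v

/-- `C` is (the edge set of) a nontrivial trail-undirectable component of `B`: the set of
trail-undirectable edges connected to some trail-undirectable edge `e` inside the subgraph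
induced by the trail-undirectable edges. -/
def IsUComp (B : BidirGraph V E) (r : V) (C : Set E) : Prop :=
  ∃ e, B.TrailUndirectable r e ∧ C = {f | Relation.ReflTransGen (B.UStep r) e f}

/-- `v` is a vertex of the edge set `C` (i.e. an endpoint of one of its edges). -/
def VC (B : BidirGraph V E) (C : Set E) (v : V) : Prop :=
  ∃ e ∈ C, B.Incident e v

/-- `B` is edge-clean: the root lies in no nontrivial trail-undirectable component. -/
def EdgeClean (B : BidirGraph V E) (r : V) : Prop :=
  ¬ ∃ C : Set E, B.IsUComp r C ∧ B.VC C r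

/-- `B` is clean: there is no nontrivial almost path starting and ending at `r`. -/
def Clean (B : BidirGraph V E) (r : V) : Prop :=
  ¬ ∃ L, L ≠ ([] : List (E × Bool)) ∧ B.IsAlmostPathFrom r L ∧ B.trailEnd r L = r

/-- A vertex is trail-solid if it is the root, or the head of the natural orientation of a
trail-directable edge, or incident with no trail-undirectable edge. -/
def TrailSolid (B : BidirGraph V E) (r v : V) : Prop :=
  v = r ∨ (∃ e b, B.NatOrient r e b ∧ B.ohead (e, b) = v) ∨
    (∀ e : E, B.Incident e v → ¬ B.TrailUndirectable r e)

/-- Two trails are edge-disjoint if no underlying edge occurs in both. -/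
def EdgeDisj (L₁ L₂ : List (E × Bool)) : Prop :=
  ∀ (e : E) (b₁ b₂ : Bool), (e, b₁) ∈ L₁ → (e, b₂) ∈ L₂ → False

/-- Two paths are internally vertex-disjoint if they share no internal vertex. -/
def IntDisj (B : BidirGraph V E) (L₁ L₂ : List (E × Bool)) : Prop :=
  ∀ w : V, w ∈ B.Internal L₁ → w ∈ B.Internal L₂ → False

end BidirGraph

/-!
Existence: follow an `r`-trail ending in an edge of `C`. The first edge on it whose head lies in
`V(C)` is trail-directable, since otherwise it would belong to `C`, and then its tail, which is `r`
or the head of an earlier edge, would lie in `V(C)` too.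

Uniqueness: let `(f, b)` and `(g, c)` be natural orientations with heads in `V(C)` and `f ≠ g`.
Cutting an `r`-trail that ends in one of them shows that, up to symmetry, some `r`-trail ending
with `(g, c)` avoids `f`. Moving along `C` from the head of `(g, c)`, every edge of `C` turns out to
be reachable in both orientations by `r`-trails avoiding `f`. The engine is rerouting: let `L` be
an `r`-trail that passes through `(f, b)` and then ends in `x`, and let an `f`-avoiding `r`-trail
meet the part of `L` after `f`. Splicing the two either gives an `f`-avoiding `r`-trail ending in
`x`, or walks back along `L` to `f` and traverses it as `(f, !b)`, which no `r`-trail ends in.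
Finally, an `f`-avoiding `r`-trail that enters the head `v` of `(f, b)` with the sign opposite to
that of `f` at `v` extends by `(f, !b)`, a contradiction.
-/

lemma List.IsChain.exists_rel_of_append_cons {α : Type*} {R : α → α → Prop}
    {L₁ L₂ : List α} {x : α} (h : (L₁ ++ x :: L₂).IsChain R) (hne : L₁ ≠ []) :
    ∃ p, L₁.getLast? = some p ∧ R p x := by
  obtain ⟨p, hp⟩ := Option.ne_none_iff_exists'.mp (mt getLast?_eq_none_iff.mp hne)
  exact ⟨p, hp, (isChain_append.mp h).2.2 p hp x rfl⟩

lemma List.IsChain.exists_mem_rel_of_getLast? {α : Type*} {R : α → α → Prop} {a x : α}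
    {M : List α} (h : (a :: M).IsChain R) (hx : M.getLast? = some x) :
    ∃ p ∈ a :: M, R p x := by
  rw [← dropLast_append_getLast? x hx, ← cons_append] at h
  obtain ⟨p, hp, hpx⟩ := h.exists_rel_of_append_cons (cons_ne_nil _ _)
  exact ⟨p, mem_cons.mpr ((mem_cons.mp (mem_of_getLast? hp)).imp_right (dropLast_sublist M).mem),
    hpx⟩

namespace BidirGraph

open List

variable {V E : Type}

def Continues (B : BidirGraph V E) (a b : E × Bool) : Prop :=
  B.ohead a = B.otail b ∧ B.sign a.1 (B.ohead a) ≠ B.sign b.1 (B.ohead a)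

def orev (x : E × Bool) : E × Bool := (x.1, !x.2)

def reverseTrail (L : List (E × Bool)) : List (E × Bool) := (L.map orev).reverse

section OrientedEdges

variable (B : BidirGraph V E)

@[simp] lemma orev_fst (x : E × Bool) : (orev x).1 = x.1 := rfl

@[simp] lemma ohead_orev (x : E × Bool) : B.ohead (orev x) = B.otail x := by
  obtain ⟨e, c⟩ := x
  cases c <;> simp [orev, ohead, otail]

@[simp] lemma otail_orev (x : E × Bool) : B.otail (orev x) = B.ohead x := by
  obtain ⟨e, c⟩ := x
  cases c <;> simp [orev, ohead, otail]

variable {B}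

lemma Continues.orev {a b : E × Bool} (h : B.Continues a b) :
    B.Continues (orev b) (orev a) := by
  obtain ⟨hab, hs⟩ := h
  simpa [Continues, hab] using hs.symm

lemma incident_ohead (x : E × Bool) : B.Incident x.1 (B.ohead x) := by
  cases h : x.2 <;> simp [Incident, ohead, h]

lemma incident_otail (x : E × Bool) : B.Incident x.1 (B.otail x) := by
  cases h : x.2 <;> simp [Incident, otail, h]

lemma Incident.otail_eq_or_ohead_eq {e : E} {v : V} (h : B.Incident e v) (c : Bool) :
    B.otail (e, c) = v ∨ B.ohead (e, c) = v := by
  cases c <;> rcases h with h | h <;> simp [ohead, otail, h]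

lemma Incident.exists_ohead_eq {e : E} {v : V} (h : B.Incident e v) :
    ∃ c, B.ohead (e, c) = v := by
  rcases h with h | h
  · exact ⟨false, h⟩
  · exact ⟨true, h⟩

lemma Incident.exists_otail_eq {e : E} {v : V} (h : B.Incident e v) :
    ∃ c, B.otail (e, c) = v := by
  rcases h with h | h
  · exact ⟨true, h⟩
  · exact ⟨false, h⟩

lemma eq_or_eq_orev_of_fst_eq {x y : E × Bool} (h : x.1 = y.1) : x = y ∨ x = orev y := by
  obtain ⟨e, c⟩ := x
  obtain ⟨e', c'⟩ := y
  cases c <;> cases c' <;> simp_all [orev]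

end OrientedEdges

section Trails

variable {B : BidirGraph V E} {r : V}

lemma isChain_reverseTrail {L : List (E × Bool)} (h : L.IsChain B.Continues) :
    (reverseTrail L).IsChain B.Continues := by
  rw [reverseTrail, isChain_reverse, isChain_map]
  exact h.imp fun _ _ => Continues.orev

@[simp] lemma map_fst_reverseTrail (L : List (E × Bool)) :
    (reverseTrail L).map Prod.fst = (L.map Prod.fst).reverse := by
  simp [reverseTrail, Function.comp_def]

lemma head?_reverseTrail (L : List (E × Bool)) :
    (reverseTrail L).head? = L.getLast?.map orev := by
  simp [reverseTrail, getLast?_map]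

lemma getLast?_reverseTrail (L : List (E × Bool)) :
    (reverseTrail L).getLast? = L.head?.map orev := by
  simp [reverseTrail, head?_map]

lemma map_otail_eq_cons_internal {L : List (E × Bool)} {x : E × Bool}
    (hL : L.IsChain B.Continues) (hx : L.head? = some x) :
    L.map B.otail = B.otail x :: B.Internal L := by
  induction L generalizing x with
  | nil => simp at hx
  | cons a L ih =>
    obtain rfl : a = x := by simpa using hx
    cases L with
    | nil => simp [Internal]
    | cons b L =>
      obtain ⟨hab, hL⟩ := isChain_cons.mp hL
      rw [map_cons, ih hL rfl, ← (hab b rfl).1]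
      simp [Internal]

lemma internal_reverseTrail {L : List (E × Bool)} (hL : L.IsChain B.Continues) :
    B.Internal (reverseTrail L) = (B.Internal L).reverse := by
  cases hx : L.head? with
  | none => simp_all [reverseTrail, Internal]
  | some x =>
    have : (reverseTrail L).map B.ohead = (L.map B.otail).reverse := by
      simp [reverseTrail, Function.comp_def]
    rw [Internal, this, map_otail_eq_cons_internal hL hx]
    simp

lemma internal_append {A M : List (E × Bool)} (hM : M ≠ []) :
    B.Internal (A ++ M) = A.map B.ohead ++ B.Internal M := by
  simp [Internal, hM]

lemma internal_subset_of_isInfix {P L : List (E × Bool)} (h : P <:+: L) :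
    B.Internal P ⊆ B.Internal L := by
  obtain ⟨A, S, rfl⟩ := h
  rcases eq_or_ne S [] with rfl | hS
  · rcases eq_or_ne P [] with rfl | hP
    · simp [Internal]
    · simp [internal_append hP]
  · rw [append_assoc, internal_append (by simp [hS]), internal_append hS]
    intro v hv
    simp only [Internal, mem_append] at hv ⊢
    exact Or.inr (Or.inl ((dropLast_sublist _).mem hv))

lemma IsRTrail.isChain {L : List (E × Bool)} (h : B.IsRTrail r L) :
    L.IsChain B.Continues := h.1.2.2

lemma IsRTrail.nodup {L : List (E × Bool)} (h : B.IsRTrail r L) :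
    (L.map Prod.fst).Nodup := h.1.1

lemma IsRTrail.otail_eq {L : List (E × Bool)} {x : E × Bool} (h : B.IsRTrail r L)
    (hx : x ∈ L.head?) : B.otail x = r := h.1.2.1 x hx

lemma IsRTrail.of_append_left {A M : List (E × Bool)} (h : B.IsRTrail r (A ++ M)) :
    B.IsRTrail r A := by
  obtain ⟨⟨hnd, hhd, hch⟩, hint⟩ := h
  refine ⟨⟨?_, fun x hx => hhd x ?_, (isChain_append.mp hch).1⟩, fun v hv => hint v ?_⟩
  · rw [map_append] at hnd
    exact hnd.sublist (sublist_append_left _ _)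
  · simp [head?_append, Option.mem_def.mp hx]
  · exact internal_subset_of_isInfix (prefix_append A M).isInfix hv

lemma IsRTrail.ohead_ne {L : List (E × Bool)} {y z : E × Bool} (h : B.IsRTrail r L)
    (hz : L.getLast? = some z) (hzr : B.ohead z ≠ r) (hy : y ∈ L) : B.ohead y ≠ r := by
  rw [← dropLast_append_getLast? z hz, mem_append, mem_singleton] at hy
  rcases hy with hy | rfl
  · exact h.2 _ (by rw [Internal, ← map_dropLast]; exact mem_map_of_mem hy)
  · exact hzr

lemma IsRTrail.otail_ne {L₀ M : List (E × Bool)} {a y : E × Bool}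
    (hL : B.IsRTrail r (L₀ ++ a :: M)) (hy : y ∈ M) : B.otail y ≠ r := by
  have hP : a :: M <:+: L₀ ++ a :: M := (suffix_append _ _).isInfix
  have htails := map_otail_eq_cons_internal (hL.isChain.infix hP) rfl
  rw [map_cons, cons.injEq] at htails
  exact hL.2 _ (internal_subset_of_isInfix hP (htails.2 ▸ mem_map_of_mem hy))

lemma IsRTrail.exists_continues_of_append_singleton {L : List (E × Bool)} {x : E × Bool}
    (h : B.IsRTrail r (L ++ [x])) (hxr : B.otail x ≠ r) :
    ∃ t, L.getLast? = some t ∧ B.Continues t x :=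
  h.isChain.exists_rel_of_append_cons fun hnil => hxr (h.otail_eq (by simp [hnil]))

lemma IsRTrail.append {T M : List (E × Bool)} {t : E × Bool}
    (hT : B.IsRTrail r T) (ht : T.getLast? = some t) (htr : B.ohead t ≠ r)
    (hM : M.IsChain B.Continues) (htM : ∀ m ∈ M.head?, B.Continues t m)
    (hMnd : (M.map Prod.fst).Nodup) (hdisj : ∀ e ∈ M.map Prod.fst, e ∉ T.map Prod.fst)
    (hMr : ∀ v ∈ B.Internal M, v ≠ r) :
    B.IsRTrail r (T ++ M) := by
  have hTne : T ≠ [] := by rintro rfl; simp at ht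
  refine ⟨⟨?_, fun x hx => hT.otail_eq ?_, ?_⟩, fun v hv => ?_⟩
  · rw [map_append, nodup_append']
    exact ⟨hT.nodup, hMnd, fun e he he' => hdisj e he' he⟩
  · rwa [head?_append_of_ne_nil _ hTne] at hx
  · refine isChain_append.mpr ⟨hT.isChain, hM, fun x hx y hy => ?_⟩
    obtain rfl : t = x := by simpa [ht] using hx
    exact htM y hy
  · rcases eq_or_ne M [] with rfl | hMne
    · exact hT.2 v (by simpa using hv)
    rw [internal_append hMne, mem_append] at hv
    rcases hv with hv | hv
    · obtain ⟨y, hy, rfl⟩ := mem_map.mp hv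
      exact hT.ohead_ne ht htr hy
    · exact hMr v hv

lemma IsRTrail.append_infix {T P L : List (E × Bool)} {t : E × Bool}
    (hT : B.IsRTrail r T) (ht : T.getLast? = some t) (htr : B.ohead t ≠ r)
    (hL : B.IsRTrail r L) (hP : P <:+: L) (htP : ∀ p ∈ P.head?, B.Continues t p)
    (hdisj : ∀ e ∈ P.map Prod.fst, e ∉ T.map Prod.fst) :
    B.IsRTrail r (T ++ P) :=
  hT.append ht htr (hL.isChain.infix hP) htP (hL.nodup.sublist (hP.sublist.map _)) hdisj
    fun v hv => hL.2 v (internal_subset_of_isInfix hP hv)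

lemma IsRTrail.append_reverseTrail_infix {T P L : List (E × Bool)} {t : E × Bool}
    (hT : B.IsRTrail r T) (ht : T.getLast? = some t) (htr : B.ohead t ≠ r)
    (hL : B.IsRTrail r L) (hP : P <:+: L) (htP : ∀ p ∈ P.getLast?, B.Continues t (orev p))
    (hdisj : ∀ e ∈ P.map Prod.fst, e ∉ T.map Prod.fst) :
    B.IsRTrail r (T ++ reverseTrail P) := by
  have hPch := hL.isChain.infix hP
  refine hT.append ht htr (isChain_reverseTrail hPch) ?_ ?_ ?_ ?_
  · intro m hm
    rw [head?_reverseTrail] at hm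
    obtain ⟨p, hp, rfl⟩ := Option.mem_map.mp hm
    exact htP p hp
  · rw [map_fst_reverseTrail, nodup_reverse]
    exact hL.nodup.sublist (hP.sublist.map _)
  · simpa using hdisj
  · intro v hv
    rw [internal_reverseTrail hPch, mem_reverse] at hv
    exact hL.2 v (internal_subset_of_isInfix hP hv)

end Trails

def Reaches (B : BidirGraph V E) (r : V) (x : E × Bool) : Prop :=
  ∃ L, B.IsRTrail r L ∧ L.getLast? = some x

def ReachesAvoiding (B : BidirGraph V E) (r : V) (f : E) (x : E × Bool) : Prop :=
  ∃ L, B.IsRTrail r L ∧ L.getLast? = some x ∧ f ∉ L.map Prod.fst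

def EntersAvoiding (B : BidirGraph V E) (r : V) (f : E) (w : V) (α : Bool) : Prop :=
  ∃ t, B.ReachesAvoiding r f t ∧ B.ohead t = w ∧ B.sign t.1 w = α

section Reachability

variable {B : BidirGraph V E} {r : V}

lemma IsRTrail.reaches_of_mem {L : List (E × Bool)} {x : E × Bool} (h : B.IsRTrail r L)
    (hx : x ∈ L) : B.Reaches r x := by
  obtain ⟨A, M, rfl⟩ := append_of_mem hx
  exact ⟨A ++ [x], (by simpa using h : B.IsRTrail r ((A ++ [x]) ++ M)).of_append_left, by simp⟩

lemma TrailUndirectable.reaches {e : E} (h : B.TrailUndirectable r e) (c : Bool) :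
    B.Reaches r (e, c) := by
  cases c
  exacts [h.2, h.1]

lemma TrailUndirectable.ne {e f : E} {b : Bool} (h : B.TrailUndirectable r e)
    (hf : ¬ B.Reaches r (f, !b)) : e ≠ f := by
  rintro rfl
  exact hf (h.reaches _)

lemma natOrient_of_reaches {e : E} {c : Bool} (h : B.Reaches r (e, c))
    (hu : ¬ B.TrailUndirectable r e) : B.NatOrient r e c := by
  refine ⟨h, fun h' => hu ?_⟩
  cases c
  exacts [⟨h', h⟩, ⟨h, h'⟩]

lemma eq_of_reaches {f : E} {b c : Bool} (hf : ¬ B.Reaches r (f, !b))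
    (h : B.Reaches r (f, c)) : c = b := by
  by_contra hcb
  exact hf (by rwa [← Bool.eq_not.mpr hcb])

lemma IsRTrail.exists_eq_append_cons {L : List (E × Bool)} {f : E} {b : Bool}
    (hf : ¬ B.Reaches r (f, !b)) (hL : B.IsRTrail r L) (hfL : f ∈ L.map Prod.fst) :
    ∃ L₀ M, L = L₀ ++ (f, b) :: M := by
  obtain ⟨⟨e, c⟩, hx, rfl⟩ := mem_map.mp hfL
  obtain rfl := eq_of_reaches hf (hL.reaches_of_mem hx)
  exact append_of_mem hx

lemma ReachesAvoiding.entersAvoiding_otail {f : E} {x : E × Bool}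
    (h : B.ReachesAvoiding r f x) (hxr : B.otail x ≠ r) :
    B.EntersAvoiding r f (B.otail x) (!B.sign x.1 (B.otail x)) := by
  obtain ⟨L, hL, hx, hLf⟩ := h
  rw [← dropLast_append_getLast? x hx] at hL hLf
  obtain ⟨t, ht, htx, hs⟩ := hL.exists_continues_of_append_singleton hxr
  refine ⟨t, ⟨L.dropLast, hL.of_append_left, ht, fun h => hLf ?_⟩, htx, ?_⟩
  · rw [map_append]
    exact mem_append_left _ h
  · rw [htx] at hs
    exact Bool.eq_not.mpr hs

end Reachability

section Rerouting

variable {B : BidirGraph V E} {r : V} {f : E} {b : Bool}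

-- `T` joins `M` at `y` either forwards, and then follows `M` to its end `x`, or backwards, and
-- then walks back along `(f, b) :: M`, ending with `(f, !b)`.
lemma reachesAvoiding_of_disjoint_junction (hf : ¬ B.Reaches r (f, !b))
    {L₀ M T : List (E × Bool)} {x t : E × Bool}
    (hL : B.IsRTrail r (L₀ ++ (f, b) :: M)) (hx : M.getLast? = some x)
    (hT : B.IsRTrail r T) (ht : T.getLast? = some t) (htr : B.ohead t ≠ r)
    (hTf : f ∉ T.map Prod.fst) (hdisj : ∀ e ∈ M.map Prod.fst, e ∉ T.map Prod.fst)
    (hjoin : (∃ y ∈ M, B.Continues t y) ∨ ∃ y ∈ (f, b) :: M, B.Continues t (orev y)) :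
    B.ReachesAvoiding r f x := by
  have hfM : f ∉ M.map Prod.fst := by
    have hnd := hL.nodup
    simp only [map_append, map_cons, nodup_append, nodup_cons] at hnd
    exact hnd.2.1.1
  rcases hjoin with ⟨y, hy, hty⟩ | ⟨y, hy, hty⟩
  · obtain ⟨M₁, M₂, hM⟩ := append_of_mem hy
    have hPM : ∀ e ∈ (y :: M₂).map Prod.fst, e ∈ M.map Prod.fst := fun e he => by
      rw [hM, map_append]
      exact mem_append_right _ he
    have hP : y :: M₂ <:+: L₀ ++ (f, b) :: M := ⟨L₀ ++ (f, b) :: M₁, [], by simp [hM]⟩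
    refine ⟨T ++ y :: M₂, hT.append_infix ht htr hL hP (by simpa using hty)
      (fun e he => hdisj e (hPM e he)), by simpa [hM] using hx, ?_⟩
    rw [map_append, mem_append, not_or]
    exact ⟨hTf, fun h => hfM (hPM f h)⟩
  · obtain ⟨P₁, P₂, hsplit⟩ := append_of_mem hy
    have hP' : P₁ ++ [y] <+: (f, b) :: M := ⟨P₂, by simp [hsplit]⟩
    have hP : P₁ ++ [y] <:+: L₀ ++ (f, b) :: M := ⟨L₀, P₂, by simp [hsplit]⟩
    have hhead : (P₁ ++ [y]).head? = some (f, b) := by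
      have : ((P₁ ++ [y]) ++ P₂).head? = some (f, b) := by simp [← hsplit]
      rwa [head?_append_of_ne_nil _ (by simp)] at this
    refine absurd ⟨T ++ reverseTrail (P₁ ++ [y]), hT.append_reverseTrail_infix ht htr hL hP
      (by simpa using hty) fun e he => ?_, ?_⟩ hf
    · have he' := (hP'.sublist.map Prod.fst).subset he
      rw [map_cons, mem_cons] at he'
      rcases he' with rfl | he'
      exacts [hTf, hdisj e he']
    · rw [getLast?_append_of_ne_nil _ (by simp [reverseTrail]), getLast?_reverseTrail, hhead]
      rfl

lemma reachesAvoiding_of_junction (hf : ¬ B.Reaches r (f, !b))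
    {L₀ M : List (E × Bool)} {x t : E × Bool}
    (hL : B.IsRTrail r (L₀ ++ (f, b) :: M)) (hx : M.getLast? = some x) (hxr : B.ohead x ≠ r)
    (ht : B.ReachesAvoiding r f t) (htr : B.ohead t ≠ r)
    (hjoin : (∃ y ∈ M, B.Continues t y) ∨ ∃ y ∈ (f, b) :: M, B.Continues t (orev y)) :
    B.ReachesAvoiding r f x := by
  classical
  obtain ⟨T, hT, hTt, hTf⟩ := ht
  by_cases hshared : ∃ z ∈ T, z.1 ∈ M.map Prod.fst
  swap
  · refine reachesAvoiding_of_disjoint_junction hf hL hx hT hTt htr hTf (fun e he heT => ?_) hjoin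
    obtain ⟨z, hz, rfl⟩ := mem_map.mp heT
    exact hshared ⟨z, hz, he⟩
  -- Cut `T` just before its first edge `z` on `M`; the cut point joins `M` at `z`.
  obtain ⟨z₀, hz₀, hz₀M⟩ := hshared
  obtain ⟨z, T₁, T₂, hT₁, hzM, rfl, -⟩ :=
    exists_of_eraseP (p := fun z => decide (z.1 ∈ M.map Prod.fst)) hz₀ (by simpa using hz₀M)
  simp only [decide_eq_true_eq] at hT₁ hzM
  obtain ⟨y, hy, hyz⟩ := mem_map.mp hzM
  have hLx : (L₀ ++ (f, b) :: M).getLast? = some x := by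
    rw [getLast?_append_of_ne_nil _ (cons_ne_nil _ _), getLast?_cons, hx]
    rfl
  have hzy := eq_or_eq_orev_of_fst_eq hyz.symm
  have hzr : B.otail z ≠ r := by
    rcases hzy with rfl | rfl
    · exact hL.otail_ne hy
    · simpa using hL.ohead_ne hLx hxr (by simp [hy])
  obtain ⟨t₁, ht₁, htz⟩ := hT.isChain.exists_rel_of_append_cons (x := z) (L₂ := T₂) <| by
    rintro rfl
    exact hzr (hT.otail_eq rfl)
  refine reachesAvoiding_of_disjoint_junction hf hL hx hT.of_append_left ht₁ (htz.1 ▸ hzr)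
    (fun h => hTf (by simp only [map_append, mem_append]; exact Or.inl h)) (fun e he heT => ?_) ?_
  · obtain ⟨a, ha, rfl⟩ := mem_map.mp heT
    exact hT₁ a ha he
  · rcases hzy with rfl | rfl
    · exact Or.inl ⟨z, hy, htz⟩
    · exact Or.inr ⟨y, mem_cons_of_mem _ hy, htz⟩

lemma reachesAvoiding_or_exists_append (hf : ¬ B.Reaches r (f, !b)) {x : E × Bool}
    (hx : B.Reaches r x) (hxf : x.1 ≠ f) :
    B.ReachesAvoiding r f x ∨
      ∃ L₀ M, B.IsRTrail r (L₀ ++ (f, b) :: M) ∧ M.getLast? = some x := by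
  obtain ⟨L, hL, hLx⟩ := hx
  by_cases hfL : f ∈ L.map Prod.fst
  · obtain ⟨L₀, M, rfl⟩ := hL.exists_eq_append_cons hf hfL
    refine Or.inr ⟨L₀, M, hL, ?_⟩
    rcases eq_or_ne M [] with rfl | hM
    · obtain rfl : (f, b) = x := by simpa using hLx
      exact absurd rfl hxf
    · rwa [← singleton_append, ← append_assoc, getLast?_append_of_ne_nil _ hM] at hLx
  · exact Or.inl ⟨L, hL, hLx, hfL⟩

variable {g : E} {w : V} {α : Bool}

lemma reachesAvoiding_of_entersAvoiding_of_ne (hf : ¬ B.Reaches r (f, !b))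
    (hw : B.EntersAvoiding r f w α) (hg : B.TrailUndirectable r g)
    (hgw : B.Incident g w) (hgr : ∀ u, B.Incident g u → u ≠ r) (hα : α ≠ B.sign g w)
    (c : Bool) : B.ReachesAvoiding r f (g, c) := by
  obtain ⟨t, ht, htw, htα⟩ := hw
  rcases reachesAvoiding_or_exists_append hf (hg.reaches c) (hg.ne hf) with h | ⟨L₀, M, hL, hx⟩
  · exact h
  refine reachesAvoiding_of_junction hf hL hx (hgr _ (incident_ohead (g, c))) ht
    (htw ▸ hgr w hgw) ?_
  have hs : B.sign t.1 (B.ohead t) ≠ B.sign g (B.ohead t) := by rwa [htw, htα]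
  have hgM : (g, c) ∈ M := mem_of_getLast? hx
  rcases hgw.otail_eq_or_ohead_eq c with h | h
  · exact Or.inl ⟨(g, c), hgM, by rw [htw, h], hs⟩
  · exact Or.inr ⟨(g, c), mem_cons_of_mem _ hgM, by simp [htw, h], hs⟩

lemma reachesAvoiding_of_entersAvoiding (hf : ¬ B.Reaches r (f, !b))
    (hw : B.EntersAvoiding r f w α) (hg : B.TrailUndirectable r g)
    (hgw : B.Incident g w) (hgr : ∀ u, B.Incident g u → u ≠ r) (c : Bool) :
    B.ReachesAvoiding r f (g, c) := by
  by_cases hα : α = B.sign g w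
  swap
  · exact reachesAvoiding_of_entersAvoiding_of_ne hf hw hg hgw hgr hα c
  obtain ⟨c₀, hc₀⟩ := hgw.exists_otail_eq
  -- A trail through `f` ending with `(g, c₀)` enters `w` just before `g` with sign `≠ α`;
  -- walking it back from there to `f` would end with `(f, !b)`.
  have hleave : B.ReachesAvoiding r f (g, c₀) := by
    obtain ⟨t, ht, htw, htα⟩ := hw
    rcases reachesAvoiding_or_exists_append hf (hg.reaches c₀) (hg.ne hf) with h | ⟨L₀, M, hL, hx⟩
    · exact h
    obtain ⟨p, hp, hpg⟩ :=
      (hL.isChain.infix (suffix_append _ _).isInfix).exists_mem_rel_of_getLast? hx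
    refine reachesAvoiding_of_junction hf hL hx (hgr _ (incident_ohead (g, c₀))) ht
      (htw ▸ hgr w hgw)
      (Or.inr ⟨p, hp, ?_, ?_⟩)
    · rw [otail_orev, htw, hpg.1, hc₀]
    · have hs := hpg.2
      rw [hpg.1, hc₀] at hs
      simpa [htw, htα, hα] using hs.symm
  have hent := hleave.entersAvoiding_otail (hc₀ ▸ hgr w hgw)
  rw [hc₀] at hent
  exact reachesAvoiding_of_entersAvoiding_of_ne hf hent hg hgw hgr (by simp) c

lemma entersAvoiding_of_forall_reachesAvoiding (hg : ∀ c, B.ReachesAvoiding r f (g, c))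
    (hgw : B.Incident g w) (hwr : w ≠ r) (α : Bool) : B.EntersAvoiding r f w α := by
  obtain ⟨c, hc⟩ := hgw.exists_ohead_eq
  obtain ⟨c', hc'⟩ := hgw.exists_otail_eq
  rcases Bool.eq_or_eq_not α (B.sign g w) with rfl | rfl
  · exact ⟨(g, c), hg c, hc, rfl⟩
  · have hent := (hg c').entersAvoiding_otail (hc' ▸ hwr)
    rwa [hc'] at hent

lemma not_entersAvoiding (hf : ¬ B.Reaches r (f, !b)) (hfr : B.ohead (f, b) ≠ r) :
    ¬ B.EntersAvoiding r f (B.ohead (f, b)) (!B.sign f (B.ohead (f, b))) := by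
  rintro ⟨t, ⟨T, hT, hTt, hTf⟩, htw, hts⟩
  refine hf ⟨T ++ [orev (f, b)], hT.append hTt (htw ▸ hfr) (isChain_singleton _) ?_
    (by simp) (by simpa using hTf) (by simp [Internal]), by simp [orev]⟩
  intro m hm
  obtain rfl : orev (f, b) = m := by simpa using hm
  refine ⟨by rw [otail_orev, htw], ?_⟩
  simp [htw, hts, orev]

end Rerouting

section Components

variable {B : BidirGraph V E} {r : V} {C : Set E}

lemma IsUComp.undirectable (hC : B.IsUComp r C) {g : E} (hg : g ∈ C) :
    B.TrailUndirectable r g := by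
  obtain ⟨e, he, rfl⟩ := hC
  induction hg with
  | refl => exact he
  | tail _ h _ => exact h.2.1

lemma IsUComp.mem_of_incident (hC : B.IsUComp r C) {g g' : E} {v : V} (hg : g ∈ C)
    (hg' : B.TrailUndirectable r g') (hgv : B.Incident g v) (hg'v : B.Incident g' v) :
    g' ∈ C := by
  have hgu := hC.undirectable hg
  obtain ⟨e, he, rfl⟩ := hC
  exact Relation.ReflTransGen.tail hg ⟨hgu, hg', v, hgv, hg'v⟩

lemma IsUComp.nonempty (hC : B.IsUComp r C) : C.Nonempty := by
  obtain ⟨e, he, rfl⟩ := hC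
  exact ⟨e, Relation.ReflTransGen.refl⟩

lemma IsUComp.induction_on (hC : B.IsUComp r C) (P : E → Prop) {e : E} (he : e ∈ C)
    (hPe : P e)
    (hstep : ∀ g g' v, g ∈ C → g' ∈ C → B.Incident g v → B.Incident g' v → P g → P g')
    {g : E} (hg : g ∈ C) : P g := by
  obtain ⟨e₀, he₀, rfl⟩ := hC
  have : Std.Symm (B.UStep r) := ⟨fun _ _ ⟨ha, hb, v, hav, hbv⟩ => ⟨hb, ha, v, hbv, hav⟩⟩
  have heg : Relation.ReflTransGen (B.UStep r) e g := (Std.Symm.symm _ _ he).trans hg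
  induction heg with
  | refl => exact hPe
  | @tail g' g'' heg' hstep' ih =>
    obtain ⟨-, -, v, hv', hv''⟩ := hstep'
    have hg' : g' ∈ {f | Relation.ReflTransGen (B.UStep r) e₀ f} := he.trans heg'
    exact hstep g' g'' v hg' hg hv' hv'' (ih hg')

end Components

section MainArgument

variable {B : BidirGraph V E} {r : V} {C : Set E}

lemma exists_natOrient_head_mem (hC : B.IsUComp r C) (hrC : ¬ B.VC C r) :
    ∃ f b, B.NatOrient r f b ∧ B.VC C (B.ohead (f, b)) := by
  classical
  obtain ⟨e, he⟩ := hC.nonempty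
  obtain ⟨L, hL, hLe⟩ := (hC.undirectable he).reaches true
  obtain ⟨x, L₁, L₂, hL₁, hxC, rfl, -⟩ :=
    exists_of_eraseP (p := fun x => decide (B.VC C (B.ohead x))) (mem_of_getLast? hLe)
      (by simpa using ⟨e, he, incident_ohead (e, true)⟩)
  simp only [decide_eq_true_eq] at hL₁ hxC
  refine ⟨x.1, x.2, natOrient_of_reaches (hL.reaches_of_mem (by simp)) fun hx => ?_, hxC⟩
  obtain ⟨g, hg, hgx⟩ := hxC
  have htail : B.VC C (B.otail x) :=
    ⟨x.1, hC.mem_of_incident hg hx hgx (incident_ohead x), incident_otail x⟩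
  rcases eq_or_ne L₁ [] with rfl | hne
  · exact hrC (hL.otail_eq rfl ▸ htail)
  · obtain ⟨p, hp, hpx⟩ := hL.isChain.exists_rel_of_append_cons hne
    exact hL₁ p (mem_of_getLast? hp) (hpx.1 ▸ htail)

lemma reachesAvoiding_or_reachesAvoiding {f g : E} {b c : Bool} (hf : B.NatOrient r f b)
    (hg : B.NatOrient r g c) (hfg : f ≠ g) :
    B.ReachesAvoiding r g (f, b) ∨ B.ReachesAvoiding r f (g, c) := by
  rcases reachesAvoiding_or_exists_append hf.2 hg.1 hfg.symm with h | ⟨L₀, M, hL, hx⟩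
  · exact Or.inr h
  refine Or.inl ⟨L₀ ++ [(f, b)], ?_, by simp, fun hgL => ?_⟩
  · rw [← singleton_append, ← append_assoc] at hL
    exact hL.of_append_left
  · have hnd := hL.nodup
    rw [← singleton_append, ← append_assoc, map_append, nodup_append'] at hnd
    exact hnd.2.2 hgL (mem_map_of_mem (mem_of_getLast? hx))

lemma not_reachesAvoiding_of_head_mem (hC : B.IsUComp r C) (hrC : ¬ B.VC C r) {f g : E}
    {b c : Bool} (hf : B.NatOrient r f b) (hfC : B.VC C (B.ohead (f, b)))
    (hgC : B.VC C (B.ohead (g, c))) : ¬ B.ReachesAvoiding r f (g, c) := by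
  intro hg
  have hCr : ∀ {e u}, e ∈ C → B.Incident e u → u ≠ r := fun he hu hur => hrC (hur ▸ ⟨_, he, hu⟩)
  have hgood : ∀ e ∈ C, ∀ d, B.ReachesAvoiding r f (e, d) := by
    obtain ⟨e₁, he₁, he₁v⟩ := hgC
    refine fun e he => hC.induction_on (fun e => ∀ d, B.ReachesAvoiding r f (e, d)) he₁ ?_ ?_ he
    · exact reachesAvoiding_of_entersAvoiding hf.2 ⟨(g, c), hg, rfl, rfl⟩ (hC.undirectable he₁)
        he₁v fun _ => hCr he₁
    · intro e e' v he he' hev he'v hgood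
      exact reachesAvoiding_of_entersAvoiding hf.2
        (entersAvoiding_of_forall_reachesAvoiding hgood hev (hCr he hev) true)
        (hC.undirectable he') he'v fun _ => hCr he'
  obtain ⟨e₂, he₂, he₂v⟩ := hfC
  exact not_entersAvoiding hf.2 (hCr he₂ he₂v)
    (entersAvoiding_of_forall_reachesAvoiding (hgood e₂ he₂) he₂v (hCr he₂ he₂v) _)

end MainArgument

end BidirGraph

open BidirGraph in
theorem stmt0_general {V E : Type} (B : BidirGraph V E) (r : V)
    (C : Set E) (hC : B.IsUComp r C) (hrC : ¬ B.VC C r) :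
    ∃! f : E, ∃ b : Bool, B.NatOrient r f b ∧ B.VC C (B.ohead (f, b)) := by
  obtain ⟨f, b, hf, hfC⟩ := exists_natOrient_head_mem hC hrC
  refine ⟨f, ⟨b, hf, hfC⟩, ?_⟩
  rintro g ⟨c, hg, hgC⟩
  by_contra hgf
  rcases reachesAvoiding_or_reachesAvoiding hg hf hgf with h | h
  · exact not_reachesAvoiding_of_head_mem hC hrC hf hfC hgC h
  · exact not_reachesAvoiding_of_head_mem hC hrC hg hgC hfC h

open BidirGraph in
/-- In a trail-reachable bidirected graph rooted at `r`, every nontrivial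
trail-undirectable component `C` with `r ∉ V(C)` has exactly one trail-directable edge
whose natural orientation has its head in `C`. -/
theorem stmt0 {V E : Type} (B : BidirGraph V E) (r : V)
    (hreach : B.TrailReachable r)
    (C : Set E) (hC : B.IsUComp r C) (hrC : ¬ B.VC C r) :
    ∃! f : E, ∃ b : Bool, B.NatOrient r f b ∧ B.VC C (B.ohead (f, b)) :=
  stmt0_general B r C hC hrC
end

section
/- Let B be a trail-reachable bidirected graph rooted at r, and let x be a trail-solid vertex with x ≠ r. Then there exists a sign \alpha in {+,-} such that B contains no path from r ending at x with sign \alpha. -/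
/-!
If an `r`-path ends at `x ≠ r` with sign `α`, its last edge is the only edge of the path at `x`,
so the path extends by any other edge leaving `x` with sign `≠ α`, and this `r`-trail ends in that
edge oriented away from `x`. If `x` is the head of the natural orientation of `e`, taking `α` to
be the opposite of the sign of `e` at `x` would thus produce an `r`-trail ending in `e` against
its natural orientation. If no trail-undirectable edge meets `x`, a path ending at `x` with sign
`+` extends by the last edge of a path ending at `x` with sign `-`, so that edge would be
trail-undirectable.
-/

namespace BidirGraph

variable {V E : Type} {B : BidirGraph V E}

lemma otail_flip (B : BidirGraph V E) (e : E) (b : Bool) : B.otail (e, !b) = B.ohead (e, b) := by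
  cases b <;> rfl

lemma incident_ohead_s7 (B : BidirGraph V E) (oe : E × Bool) : B.Incident oe.1 (B.ohead oe) := by
  obtain ⟨e, b⟩ := oe
  cases b <;> simp [ohead, Incident]

lemma incident_iff (B : BidirGraph V E) (oe : E × Bool) (v : V) :
    B.Incident oe.1 v ↔ B.ohead oe = v ∨ B.otail oe = v := by
  obtain ⟨e, b⟩ := oe
  cases b <;> simp only [Incident, ohead, otail, Bool.false_eq_true, if_true, if_false, or_comm]

lemma internal_append_singleton (B : BidirGraph V E) (L : List (E × Bool)) (f : E × Bool) :
    B.Internal (L ++ [f]) = L.map B.ohead := by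
  simp [Internal]

lemma internal_cons (B : BidirGraph V E) (a : E × Bool) {L : List (E × Bool)} (hL : L ≠ []) :
    B.Internal (a :: L) = B.ohead a :: B.Internal L := by
  cases L with
  | nil => contradiction
  | cons c L => simp [Internal]

lemma IsTrailFrom.of_cons {v : V} {a : E × Bool} {L : List (E × Bool)}
    (h : B.IsTrailFrom v (a :: L)) : B.IsTrailFrom (B.ohead a) L := by
  obtain ⟨hnodup, -, hchain⟩ := h
  refine ⟨(List.nodup_cons.mp hnodup).2, fun b hb => ?_, hchain.tail⟩
  cases L with
  | nil => simp at hb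
  | cons c L =>
    obtain rfl : c = b := by simpa using hb
    exact (List.isChain_cons_cons.mp hchain).1.1.symm

lemma IsTrailFrom.otail_mem {v : V} {L : List (E × Bool)} (h : B.IsTrailFrom v L)
    {g : E × Bool} (hg : g ∈ L) : B.otail g ∈ v :: B.Internal L := by
  induction L generalizing v with
  | nil => simp at hg
  | cons a L ih =>
    rcases List.mem_cons.mp hg with rfl | hgL
    · exact List.mem_cons.mpr (Or.inl (h.2.1 g rfl))
    · rw [internal_cons B a (List.ne_nil_of_mem hgL)]
      exact List.mem_cons_of_mem _ (ih h.of_cons hgL)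

lemma IsTrailFrom.append_singleton {v : V} {L : List (E × Bool)} {f g : E × Bool}
    (h : B.IsTrailFrom v (L ++ [f])) (htail : B.otail g = B.ohead f)
    (hfresh : g.1 ∉ (L ++ [f]).map Prod.fst)
    (hsign : B.sign f.1 (B.ohead f) ≠ B.sign g.1 (B.ohead f)) :
    B.IsTrailFrom v (L ++ [f] ++ [g]) := by
  obtain ⟨hnodup, hhead, hchain⟩ := h
  refine ⟨?_, ?_, ?_⟩
  · rw [List.map_append, List.map_singleton]
    refine List.nodup_append.mpr ⟨hnodup, List.nodup_singleton _, ?_⟩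
    rintro a ha b hb rfl
    exact hfresh (List.mem_singleton.mp hb ▸ ha)
  · rwa [List.head?_append_of_ne_nil _ (by simp)]
  · refine List.isChain_append.mpr ⟨hchain, List.isChain_singleton _, ?_⟩
    simp only [List.getLast?_append, List.getLast?_singleton, Option.some_or, Option.mem_def,
      Option.some.injEq, List.head?_cons]
    rintro _ rfl _ rfl
    exact ⟨htail.symm, hsign⟩

lemma IsPathFrom.isRTrail {r : V} {L : List (E × Bool)} (h : B.IsPathFrom r L) :
    B.IsRTrail r L := by
  refine ⟨h.1, fun v hv hvr => ?_⟩
  exact (List.nodup_cons.mp h.2).1 (hvr ▸ List.dropLast_subset _ hv)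

lemma IsPathFrom.not_incident_ohead {r : V} {L : List (E × Bool)} {f g : E × Bool}
    (h : B.IsPathFrom r (L ++ [f])) (hfr : B.ohead f ≠ r) (hg : g ∈ L) :
    ¬ B.Incident g.1 (B.ohead f) := by
  have hnodup : (L.map B.ohead ++ [B.ohead f]).Nodup := by
    simpa using (List.nodup_cons.mp h.2).2
  have hfL : B.ohead f ∉ L.map B.ohead := fun hmem =>
    (List.nodup_append.mp hnodup).2.2 _ hmem _ (List.mem_singleton_self _) rfl
  rw [incident_iff]
  rintro (hhead | htail)
  · exact hfL (hhead ▸ List.mem_map_of_mem hg)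
  · have := h.1.otail_mem (List.mem_append_left _ hg)
    rw [internal_append_singleton, htail] at this
    exact (List.mem_cons.mp this).elim hfr hfL

lemma IsPathFrom.isRTrail_append_singleton {r : V} {L : List (E × Bool)} {f g : E × Bool}
    (h : B.IsPathFrom r (L ++ [f])) (htail : B.otail g = B.ohead f)
    (hfresh : g.1 ∉ (L ++ [f]).map Prod.fst)
    (hsign : B.sign f.1 (B.ohead f) ≠ B.sign g.1 (B.ohead f)) :
    B.IsRTrail r (L ++ [f] ++ [g]) := by
  refine ⟨h.1.append_singleton htail hfresh hsign, fun v hv hvr => ?_⟩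
  rw [internal_append_singleton] at hv
  exact (List.nodup_cons.mp h.2).1 (hvr ▸ hv)

lemma IsPathFrom.exists_isRTrail_getLast_flip {r x : V} {L : List (E × Bool)} {α : Bool}
    (h : B.IsPathFrom r L) (hend : B.EndsAtSigned L x α) (hxr : x ≠ r)
    {e : E} {b : Bool} (hhead : B.ohead (e, b) = x) (hsign : B.sign e x ≠ α) :
    ∃ L', B.IsRTrail r L' ∧ L'.getLast? = some (e, !b) := by
  obtain ⟨f, hlast, rfl, rfl⟩ := hend
  obtain ⟨L, rfl⟩ := List.getLast?_eq_some_iff.mp hlast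
  have hincident : B.Incident e (B.ohead f) := hhead ▸ B.incident_ohead_s7 (e, b)
  have hfresh : e ∉ (L ++ [f]).map Prod.fst := by
    simp only [List.map_append, List.map_singleton, List.mem_append, List.mem_map,
      List.mem_singleton, not_or, not_exists, not_and]
    refine ⟨fun g hg hge => h.not_incident_ohead hxr hg (hge ▸ hincident), fun hfe => ?_⟩
    exact hsign (hfe ▸ rfl)
  refine ⟨L ++ [f] ++ [(e, !b)], ?_, by simp⟩
  exact h.isRTrail_append_singleton (by rw [otail_flip, hhead]) hfresh (Ne.symm hsign)

lemma trailUndirectable_of_getLast {r : V} {e : E} {b : Bool} {L₁ L₂ : List (E × Bool)}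
    (h₁ : B.IsRTrail r L₁) (hl₁ : L₁.getLast? = some (e, b))
    (h₂ : B.IsRTrail r L₂) (hl₂ : L₂.getLast? = some (e, !b)) :
    B.TrailUndirectable r e := by
  cases b
  · exact ⟨⟨L₂, h₂, hl₂⟩, ⟨L₁, h₁, hl₁⟩⟩
  · exact ⟨⟨L₁, h₁, hl₁⟩, ⟨L₂, h₂, hl₂⟩⟩

end BidirGraph

open BidirGraph in
theorem stmt7_general {V E : Type} (B : BidirGraph V E) (r : V)
    (x : V) (hsolid : B.TrailSolid r x) (hxr : x ≠ r) :
    ∃ α : Bool, ¬ ∃ L, B.IsPathFrom r L ∧ B.EndsAtSigned L x α := by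
  rcases hsolid with rfl | ⟨e, b, hnat, hhead⟩ | hno
  · exact absurd rfl hxr
  · refine ⟨!(B.sign e x), fun ⟨L, hL, hend⟩ => hnat.2 ?_⟩
    exact hL.exists_isRTrail_getLast_flip hend hxr hhead (by simp)
  · by_contra! hboth
    obtain ⟨P, hP, hendP⟩ := hboth true
    obtain ⟨Q, hQ, g, hlastQ, hheadQ, hsignQ⟩ := hboth false
    obtain ⟨L, hL, hlastL⟩ :=
      hP.exists_isRTrail_getLast_flip hendP hxr (e := g.1) (b := g.2) hheadQ (by simp [hsignQ])
    exact hno g.1 (hheadQ ▸ B.incident_ohead_s7 g)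
      (trailUndirectable_of_getLast hQ.isRTrail hlastQ hL hlastL)

open BidirGraph in
/-- In a trail-reachable rooted bidirected graph, every trail-solid vertex
`x ≠ r` admits a sign `α` such that no `r`-path ends at `x` with sign `α`. -/
theorem stmt7 {V E : Type} (B : BidirGraph V E) (r : V)
    (hreach : B.TrailReachable r)
    (x : V) (hsolid : B.TrailSolid r x) (hxr : x ≠ r) :
    ∃ α : Bool, ¬ ∃ L, B.IsPathFrom r L ∧ B.EndsAtSigned L x α :=
  stmt7_general B r x hsolid hxr
end

section
/- Let B be a clean bidirected graph rooted at r. Then for every vertex v that is not plain (i.e. for each sign \alpha in {+,-} there exists an r-path ending at v with sign \alpha), the maximum number of internally vertex-disjoint r–v paths in B is 1. -/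
/-!
If two internally disjoint `r`–`v` paths end at `v` with opposite signs, following the first
and then the second backwards is a nontrivial almost path from `r` back to `r`, which
cleanness forbids. It remains to exclude two internally disjoint `r`–`v` paths `L₁`, `L₂` with
the same sign at `v` while some `r`-path `P` ends at `v` with the other sign. Let `x` be the last
internal vertex of `P` on `L₁` or `L₂`, say on `L₁`, and `Q` the part of `P` after `x`. The
part `A` of `L₁` up to `x`, and `L₂` followed by `Q` backwards, are internally disjoint
`r`–`x` paths; if their signs at `x` differ we are in the first case, and otherwise the part
of `P` before `x` is a shorter `P` for the same situation at `x`.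
-/

namespace BidirGraph

variable {V E : Type} {B : BidirGraph V E} {u w x r : V} {α β : Bool}
  {a c : E × Bool} {L M N L₁ L₂ P R Q : List (E × Bool)}

def Consecutive (B : BidirGraph V E) (a b : E × Bool) : Prop :=
  B.ohead a = B.otail b ∧ B.sign a.1 (B.ohead a) ≠ B.sign b.1 (B.ohead a)

def IsWalkFrom (B : BidirGraph V E) (u : V) (L : List (E × Bool)) : Prop :=
  (∀ oe ∈ L.head?, B.otail oe = u) ∧ L.IsChain B.Consecutive

def StartsAtSigned (B : BidirGraph V E) (L : List (E × Bool)) (w : V) (α : Bool) : Prop :=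
  ∃ oe, L.head? = some oe ∧ B.otail oe = w ∧ B.sign oe.1 w = α

def revEdge (oe : E × Bool) : E × Bool := (oe.1, !oe.2)

def revTrail (L : List (E × Bool)) : List (E × Bool) := L.reverse.map revEdge

@[simp] lemma revEdge_fst (oe : E × Bool) : (revEdge oe).1 = oe.1 := rfl

@[simp] lemma ohead_revEdge (oe : E × Bool) : B.ohead (revEdge oe) = B.otail oe := by
  obtain ⟨e, _ | _⟩ := oe <;> rfl

@[simp] lemma otail_revEdge (oe : E × Bool) : B.otail (revEdge oe) = B.ohead oe := by
  obtain ⟨e, _ | _⟩ := oe <;> rfl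

lemma otail_eq_or_eq_ohead (e : E) (b b' : Bool) :
    B.otail (e, b) = B.otail (e, b') ∨ B.otail (e, b) = B.ohead (e, b') := by
  cases b <;> cases b' <;> simp [ohead, otail]

lemma Consecutive.revEdge (h : B.Consecutive a c) : B.Consecutive (revEdge c) (revEdge a) :=
  ⟨by simp [h.1], by simpa [← h.1] using h.2.symm⟩

lemma isTrailFrom_iff : B.IsTrailFrom u L ↔ (L.map Prod.fst).Nodup ∧ B.IsWalkFrom u L :=
  Iff.rfl

lemma internal_cons_cons (a c : E × Bool) (t : List (E × Bool)) :
    B.Internal (a :: c :: t) = B.ohead a :: B.Internal (c :: t) :=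
  List.dropLast_cons_cons

lemma internal_append_s14 (hM : M ≠ []) : B.Internal (L ++ M) = L.map B.ohead ++ B.Internal M := by
  simp only [Internal, List.map_append]
  exact List.dropLast_append_of_ne_nil (by simpa using hM)

lemma trailEnd_eq_getLast :
    B.trailEnd u L = (u :: L.map B.ohead).getLast (List.cons_ne_nil _ _) := by
  rcases L.eq_nil_or_concat with rfl | ⟨L, oe, rfl⟩
  · rfl
  · simp [trailEnd]

lemma map_ohead_eq_internal_append (hL : L ≠ []) :
    L.map B.ohead = B.Internal L ++ [B.trailEnd u L] := by
  rw [trailEnd_eq_getLast, List.getLast_cons (by simpa using hL)]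
  exact (List.dropLast_append_getLast _).symm

lemma trailEnd_cons (hL : L ≠ []) : B.trailEnd u (a :: L) = B.trailEnd w L := by
  simp only [trailEnd, List.getLast?_cons, List.getLast?_eq_some_getLast hL, Option.getD_some]

lemma EndsAtSigned.ne_nil (h : B.EndsAtSigned L w α) : L ≠ [] := by
  rintro rfl; simp [EndsAtSigned] at h

lemma EndsAtSigned.trailEnd_eq (h : B.EndsAtSigned L w α) : B.trailEnd u L = w := by
  obtain ⟨oe, hoe, rfl, -⟩ := h
  simp [trailEnd, hoe]

lemma exists_endsAtSigned (hL : L ≠ []) : ∃ α, B.EndsAtSigned L (B.trailEnd u L) α := by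
  obtain ⟨oe, hoe⟩ := Option.ne_none_iff_exists'.1 (mt List.getLast?_eq_none_iff.1 hL)
  exact ⟨_, oe, hoe, by simp [trailEnd, hoe], rfl⟩

lemma endsAtSigned_append (hM : M ≠ []) :
    B.EndsAtSigned (L ++ M) w α ↔ B.EndsAtSigned M w α := by
  simp [EndsAtSigned, List.getLast?_append_of_ne_nil _ hM]

@[simp] lemma startsAtSigned_revTrail :
    B.StartsAtSigned (revTrail L) w α ↔ B.EndsAtSigned L w α := by
  simp only [StartsAtSigned, EndsAtSigned, revTrail, List.head?_map, List.head?_reverse,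
    Option.map_eq_some_iff, exists_exists_and_eq_and, otail_revEdge, revEdge_fst]

@[simp] lemma endsAtSigned_revTrail :
    B.EndsAtSigned (revTrail L) w α ↔ B.StartsAtSigned L w α := by
  simp only [StartsAtSigned, EndsAtSigned, revTrail, List.getLast?_map, List.getLast?_reverse,
    Option.map_eq_some_iff, exists_exists_and_eq_and, ohead_revEdge, revEdge_fst]

@[simp] lemma revTrail_eq_nil : revTrail L = [] ↔ L = [] := by
  simp [revTrail]

lemma map_ohead_revTrail (L : List (E × Bool)) :
    (revTrail L).map B.ohead = (L.map B.otail).reverse := by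
  simp [revTrail, Function.comp_def]

lemma trailEnd_eq_of_map_ohead {l : List V} {y : V} (h : L.map B.ohead = l ++ [y]) :
    B.trailEnd u L = y := by
  simp [trailEnd_eq_getLast, h]

lemma internal_eq_of_map_ohead {l : List V} {y : V} (h : L.map B.ohead = l ++ [y]) :
    B.Internal L = l := by
  rw [Internal, h, List.dropLast_concat]

lemma IsTrailFrom.isWalkFrom (h : B.IsTrailFrom u L) : B.IsWalkFrom u L :=
  (isTrailFrom_iff.1 h).2

lemma IsWalkFrom.tail (h : B.IsWalkFrom u (a :: L)) : B.IsWalkFrom (B.ohead a) L := by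
  refine ⟨?_, h.2.tail⟩
  rcases L with _ | ⟨c, L⟩
  · simp
  · rintro _ hc
    obtain rfl := Option.mem_some_iff.1 hc
    exact (List.isChain_cons_cons.1 h.2).1.1.symm

lemma IsWalkFrom.map_otail (h : B.IsWalkFrom u L) (hL : L ≠ []) :
    L.map B.otail = u :: B.Internal L := by
  induction L generalizing u with
  | nil => contradiction
  | cons a t ih =>
    rcases t with _ | ⟨c, t⟩
    · simp [Internal, h.1 a rfl]
    · rw [List.map_cons, h.1 a rfl, internal_cons_cons, ih h.tail (List.cons_ne_nil _ _)]

/-- A later copy of the first edge `a` cannot leave `u`, which is no tail of the rest, so it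
leaves `ohead a`; by injectivity of the tails it is then the very next edge, which cannot
continue `a` along the same edge. -/
lemma IsWalkFrom.nodup_map_fst (h : B.IsWalkFrom u L) (hnd : (u :: B.Internal L).Nodup) :
    (L.map Prod.fst).Nodup := by
  induction L generalizing u with
  | nil => simp
  | cons a t ih =>
    rcases t with _ | ⟨c, t⟩
    · simp
    rw [internal_cons_cons] at hnd
    have htails := h.tail.map_otail (List.cons_ne_nil c t)
    have hac := (List.isChain_cons_cons.1 h.2).1
    refine List.nodup_cons.2 ⟨fun hmem => ?_, ih h.tail hnd.of_cons⟩
    obtain ⟨oe, hoe, hfst⟩ := List.mem_map.1 hmem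
    have htail : B.otail oe = B.ohead a := by
      obtain ⟨e, b⟩ := oe
      obtain ⟨e', b'⟩ := a
      obtain rfl : e = e' := hfst
      refine (otail_eq_or_eq_ohead e b b').resolve_left fun hu => ?_
      have hmem' : B.otail (e, b) ∈ (c :: t).map B.otail := List.mem_map_of_mem hoe
      rw [htails, hu, h.1 _ rfl] at hmem'
      exact (List.nodup_cons.1 hnd).1 hmem'
    obtain rfl : oe = c :=
      List.inj_on_of_nodup_map (htails ▸ hnd.of_cons) hoe List.mem_cons_self (htail.trans hac.1)
    exact hac.2 (by rw [hfst])

lemma IsWalkFrom.isAlmostPathFrom (h : B.IsWalkFrom u L) (hnd : (u :: B.Internal L).Nodup) :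
    B.IsAlmostPathFrom u L :=
  ⟨isTrailFrom_iff.2 ⟨h.nodup_map_fst hnd, h⟩, hnd⟩

lemma IsWalkFrom.isPathFrom (h : B.IsWalkFrom u L) (hnd : (u :: L.map B.ohead).Nodup) :
    B.IsPathFrom u L :=
  ⟨(h.isAlmostPathFrom (hnd.sublist ((List.dropLast_sublist _).cons_cons u))).1, hnd⟩

lemma IsWalkFrom.append (h₁ : B.IsWalkFrom u L) (h₂ : B.IsWalkFrom w M)
    (he : B.EndsAtSigned L w α) (hs : B.StartsAtSigned M w (!α)) : B.IsWalkFrom u (L ++ M) := by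
  refine ⟨by rw [List.head?_append_of_ne_nil _ he.ne_nil]; exact h₁.1,
    List.isChain_append.2 ⟨h₁.2, h₂.2, ?_⟩⟩
  obtain ⟨a, ha, hah, has⟩ := he
  obtain ⟨c, hc, hct, hcs⟩ := hs
  rintro _ ha' _ hc'
  obtain rfl := Option.mem_some_iff.1 (ha ▸ ha')
  obtain rfl := Option.mem_some_iff.1 (hc ▸ hc')
  exact ⟨hah.trans hct.symm, by simp [hah, has, hcs]⟩

lemma IsWalkFrom.of_append_left (h : B.IsWalkFrom u (L ++ M)) : B.IsWalkFrom u L := by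
  refine ⟨fun oe hoe => h.1 oe ?_, (List.isChain_append.1 h.2).1⟩
  rwa [List.head?_append_of_ne_nil _ (by rintro rfl; simp at hoe)]

lemma IsWalkFrom.consecutive_of_append (h : B.IsWalkFrom u (L ++ M))
    (ha : a ∈ L.getLast?) (hc : c ∈ M.head?) : B.Consecutive a c :=
  (List.isChain_append.1 h.2).2.2 a ha c hc

lemma IsWalkFrom.of_append_right (h : B.IsWalkFrom u (L ++ M)) :
    B.IsWalkFrom (B.trailEnd u L) M := by
  refine ⟨fun c hc => ?_, (List.isChain_append.1 h.2).2.1⟩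
  rcases L.eq_nil_or_concat with rfl | ⟨L, a, rfl⟩
  · exact h.1 c hc
  · rw [trailEnd_eq_of_map_ohead (l := L.map B.ohead) (y := B.ohead a) (by simp)]
    exact (h.consecutive_of_append (by simp) hc).1.symm

lemma IsWalkFrom.startsAtSigned_of_append (h : B.IsWalkFrom u (L ++ M))
    (he : B.EndsAtSigned L w α) (hM : M ≠ []) : B.StartsAtSigned M w (!α) := by
  obtain ⟨a, ha, rfl, rfl⟩ := he
  obtain ⟨c, t, rfl⟩ := List.exists_cons_of_ne_nil hM
  have hac := h.consecutive_of_append ha rfl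
  exact ⟨c, rfl, hac.1.symm, Bool.eq_not_of_ne hac.2.symm⟩

lemma IsWalkFrom.reverse (h : B.IsWalkFrom u L) :
    B.IsWalkFrom (B.trailEnd u L) (revTrail L) := by
  refine ⟨fun oe hoe => ?_, ?_⟩
  · simp only [BidirGraph.revTrail, List.head?_map, List.head?_reverse, Option.mem_def,
      Option.map_eq_some_iff] at hoe
    obtain ⟨a, ha, rfl⟩ := hoe
    simp [trailEnd, ha]
  · rw [BidirGraph.revTrail, List.isChain_map, List.isChain_reverse]
    exact h.2.imp fun _ _ hac => hac.revEdge

lemma IsWalkFrom.append_revTrail {u' : V} (hL : B.IsWalkFrom u L) (hM : B.IsWalkFrom u' M)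
    (hLe : B.EndsAtSigned L w α) (hMe : B.EndsAtSigned M w (!α)) :
    B.IsWalkFrom u (L ++ revTrail M) :=
  hL.append (hMe.trailEnd_eq (u := u') ▸ hM.reverse) hLe (startsAtSigned_revTrail.2 hMe)

lemma IsWalkFrom.map_ohead_append_revTrail {u' : V} (hM : B.IsWalkFrom u' M) (hM0 : M ≠ []) :
    (L ++ revTrail M).map B.ohead = L.map B.ohead ++ (B.Internal M).reverse ++ [u'] := by
  rw [List.map_append, map_ohead_revTrail, hM.map_otail hM0, List.reverse_cons,
    List.append_assoc]

lemma IsPathFrom.nodup_vertices (h : B.IsPathFrom u L) (he : B.EndsAtSigned L w α) :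
    (u :: (B.Internal L ++ [w])).Nodup := by
  rw [← he.trailEnd_eq (u := u), ← map_ohead_eq_internal_append he.ne_nil]
  exact h.2

lemma IsPathFrom.ne_of_endsAtSigned (h : B.IsPathFrom u L) (he : B.EndsAtSigned L w α) :
    u ≠ w :=
  fun huw => (List.nodup_cons.1 (h.nodup_vertices he)).1 (by simp [huw])

lemma IsPathFrom.of_append_left (h : B.IsPathFrom u (L ++ M)) : B.IsPathFrom u L :=
  h.1.isWalkFrom.of_append_left.isPathFrom (h.2.sublist (by simp))

lemma mem_internal_append_of_mem_internal {y : V} (hM : M ≠ []) (hy : y ∈ B.Internal L) :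
    y ∈ B.Internal (L ++ M) := by
  rw [internal_append_s14 hM]
  exact List.mem_append_left _ (List.mem_of_mem_dropLast hy)

lemma exists_split_at_last_internal (p : V → Prop) (L : List (E × Bool)) :
    (∀ y ∈ B.Internal L, ¬ p y) ∨
      ∃ R Q, L = R ++ Q ∧ R ≠ [] ∧ Q ≠ [] ∧ p (B.trailEnd u R) ∧
        ∀ y ∈ B.Internal Q, ¬ p y := by
  induction L with
  | nil => simp [Internal]
  | cons a t ih =>
    rcases ih with h | ⟨R, Q, rfl, hR, hQ, hp, hQp⟩
    · rcases t with _ | ⟨c, t⟩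
      · simp [Internal]
      by_cases hpa : p (B.ohead a)
      · exact Or.inr ⟨[a], c :: t, rfl, List.cons_ne_nil _ _, List.cons_ne_nil _ _, hpa, h⟩
      · left
        rw [internal_cons_cons]
        exact fun y hy => (List.mem_cons.1 hy).elim (· ▸ hpa) (h y)
    · exact Or.inr ⟨a :: R, Q, rfl, List.cons_ne_nil _ _, hQ, by rwa [trailEnd_cons hR], hQp⟩

lemma exists_append_of_mem_internal (hx : x ∈ B.Internal L) :
    ∃ A A', L = A ++ A' ∧ A ≠ [] ∧ A' ≠ [] ∧ B.trailEnd u A = x := by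
  rcases exists_split_at_last_internal (B := B) (u := u) (· = x) L
    with h | ⟨A, A', hL, hA, hA', hAx, -⟩
  · exact absurd rfl (h x hx)
  · exact ⟨A, A', hL, hA, hA', hAx⟩

theorem Clean.not_intDisj_of_ends_opposite (hclean : B.Clean r)
    (hM : B.IsPathFrom r M) (hMe : B.EndsAtSigned M w α)
    (hN : B.IsPathFrom r N) (hNe : B.EndsAtSigned N w (!α)) : ¬ B.IntDisj M N := by
  intro hd
  have hW := hM.1.isWalkFrom.append_revTrail hN.1.isWalkFrom hMe hNe
  have hheads := hN.1.isWalkFrom.map_ohead_append_revTrail (L := M) hNe.ne_nil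
  refine hclean ⟨M ++ revTrail N, by simp [hMe.ne_nil], hW.isAlmostPathFrom ?_,
    trailEnd_eq_of_map_ohead hheads⟩
  rw [internal_eq_of_map_ohead hheads, map_ohead_eq_internal_append hMe.ne_nil (u := r),
    hMe.trailEnd_eq]
  have hvM := hM.nodup_vertices hMe
  have hvN := hN.nodup_vertices hNe
  simp only [List.nodup_cons, List.nodup_append, List.mem_append, List.mem_singleton,
    List.mem_reverse, List.nodup_reverse] at hvM hvN ⊢
  grind [IntDisj]

/-- `A` is `L₁` up to `x`, and `Bp` is `L₂` followed by `Q` backwards. -/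
lemma exists_detour (hL₁ : B.IsPathFrom r L₁) (hL₁e : B.EndsAtSigned L₁ w α)
    (hL₂ : B.IsPathFrom r L₂) (hL₂e : B.EndsAtSigned L₂ w α) (hd : B.IntDisj L₁ L₂)
    (hP : B.IsPathFrom r (R ++ Q)) (hPe : B.EndsAtSigned (R ++ Q) w (!α)) (hQ0 : Q ≠ [])
    (hRe : B.EndsAtSigned R x β) (hx : x ∈ B.Internal L₁)
    (hQ₁ : ∀ y ∈ B.Internal Q, y ∉ B.Internal L₁)
    (hQ₂ : ∀ y ∈ B.Internal Q, y ∉ B.Internal L₂) :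
    ∃ A Bp γ, B.IsPathFrom r A ∧ B.EndsAtSigned A x γ ∧
      B.IsPathFrom r Bp ∧ B.EndsAtSigned Bp x (!β) ∧ B.IntDisj A Bp := by
  have hPw := hP.1.isWalkFrom
  have hQw : B.IsWalkFrom x Q := hRe.trailEnd_eq (u := r) ▸ hPw.of_append_right
  have hQe := (endsAtSigned_append hQ0).1 hPe
  obtain ⟨A, A', rfl, hA0, hA'0, hAx⟩ := exists_append_of_mem_internal (u := r) hx
  obtain ⟨γ, hAγ⟩ := exists_endsAtSigned (u := r) hA0
  rw [hAx] at hAγ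
  have hA := hL₁.of_append_left
  have hheads := hQw.map_ohead_append_revTrail (L := L₂) hQ0
  have hvP := hP.2
  rw [List.map_append, map_ohead_eq_internal_append hRe.ne_nil (u := r), hRe.trailEnd_eq,
    map_ohead_eq_internal_append hQ0 (u := x), hQe.trailEnd_eq] at hvP
  have hv₁ := hL₁.nodup_vertices hL₁e
  have hv₂ := hL₂.nodup_vertices hL₂e
  have hAL₁ : ∀ y ∈ B.Internal A, y ∈ B.Internal (A ++ A') :=
    fun y => mem_internal_append_of_mem_internal hA'0
  refine ⟨A, L₂ ++ revTrail Q, γ, hA, hAγ,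
    (hL₂.1.isWalkFrom.append_revTrail hQw hL₂e hQe).isPathFrom ?_,
    (endsAtSigned_append (by simpa using hQ0)).2
      (endsAtSigned_revTrail.2 (hPw.startsAtSigned_of_append hRe hQ0)), ?_⟩
  · rw [hheads, map_ohead_eq_internal_append hL₂e.ne_nil (u := r), hL₂e.trailEnd_eq]
    simp only [List.nodup_cons, List.nodup_append, List.mem_append, List.mem_singleton,
      List.mem_reverse, List.nodup_reverse] at hvP hv₁ hv₂ ⊢
    grind [IntDisj]
  · intro y hyA hyB
    rw [internal_eq_of_map_ohead hheads, map_ohead_eq_internal_append hL₂e.ne_nil (u := r),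
      hL₂e.trailEnd_eq] at hyB
    simp only [List.nodup_cons, List.nodup_append, List.mem_append, List.mem_singleton,
      List.mem_reverse] at hvP hv₁ hv₂ hyB
    grind [IntDisj]

theorem Clean.false_of_ends_twice_opposite (hclean : B.Clean r)
    (hL₁ : B.IsPathFrom r L₁) (hL₁e : B.EndsAtSigned L₁ w α)
    (hL₂ : B.IsPathFrom r L₂) (hL₂e : B.EndsAtSigned L₂ w α) (hd : B.IntDisj L₁ L₂)
    (hP : B.IsPathFrom r P) (hPe : B.EndsAtSigned P w (!α)) : False := by
  induction hn : P.length using Nat.strong_induction_on generalizing w α L₁ L₂ P with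
  | _ n ih =>
    rcases exists_split_at_last_internal (B := B) (u := r)
        (fun y => y ∈ B.Internal L₁ ∨ y ∈ B.Internal L₂) P
      with hP₀ | ⟨R, Q, rfl, hR0, hQ0, hx, hQ⟩
    · exact hclean.not_intDisj_of_ends_opposite hL₁ hL₁e hP hPe
        fun y h₁ h₂ => hP₀ y h₂ (Or.inl h₁)
    obtain ⟨β, hRe⟩ := exists_endsAtSigned (B := B) (u := r) hR0
    obtain ⟨A, Bp, γ, hA, hAe, hBp, hBpe, hdABp⟩ : ∃ A Bp γ, B.IsPathFrom r A ∧
        B.EndsAtSigned A (B.trailEnd r R) γ ∧ B.IsPathFrom r Bp ∧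
        B.EndsAtSigned Bp (B.trailEnd r R) (!β) ∧ B.IntDisj A Bp := by
      rcases hx with hx | hx
      · exact exists_detour hL₁ hL₁e hL₂ hL₂e hd hP hPe hQ0 hRe hx
          (fun y hy h => hQ y hy (Or.inl h)) (fun y hy h => hQ y hy (Or.inr h))
      · exact exists_detour hL₂ hL₂e hL₁ hL₁e (fun y h₂ h₁ => hd y h₁ h₂)
          hP hPe hQ0 hRe hx (fun y hy h => hQ y hy (Or.inr h)) (fun y hy h => hQ y hy (Or.inl h))
    by_cases hγ : γ = β
    · subst hγ
      exact hclean.not_intDisj_of_ends_opposite hA hAe hBp hBpe hdABp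
    · obtain rfl := Bool.eq_not_of_ne hγ
      refine ih R.length ?_ hA hAe hBp hBpe hdABp hP.of_append_left (by simpa using hRe) rfl
      simpa [← hn] using List.length_pos_iff.2 hQ0

end BidirGraph

open BidirGraph in
/-- in a clean rooted bidirected graph, every non-plain vertex `v` (both
signs of `v` are reachable by `r`-paths) has exactly one internally vertex-disjoint
`r`–`v` path as the maximum: some `r`–`v` path exists, and no two distinct `r`–`v`
paths are internally vertex-disjoint. -/
theorem stmt14 {V E : Type} (B : BidirGraph V E) (r : V)
    (hclean : B.Clean r) (v : V)
    (hv : ∀ α : Bool, ∃ L, B.IsPathFrom r L ∧ B.EndsAtSigned L v α) :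
    (∃ L, B.IsPathFrom r L ∧ B.trailEnd r L = v) ∧
      ∀ L₁ L₂, (B.IsPathFrom r L₁ ∧ B.trailEnd r L₁ = v) →
        (B.IsPathFrom r L₂ ∧ B.trailEnd r L₂ = v) →
        L₁ ≠ L₂ → ¬ B.IntDisj L₁ L₂ := by
  obtain ⟨L₀, hL₀, hL₀e⟩ := hv true
  refine ⟨⟨L₀, hL₀, hL₀e.trailEnd_eq⟩, ?_⟩
  have hne : ∀ L, B.trailEnd r L = v → L ≠ [] := by
    rintro L hL rfl
    exact hL₀.ne_of_endsAtSigned hL₀e hL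
  rintro L₁ L₂ ⟨hL₁, hL₁v⟩ ⟨hL₂, hL₂v⟩ - hd
  obtain ⟨α, hL₁e⟩ := exists_endsAtSigned (u := r) (hne L₁ hL₁v)
  obtain ⟨α₂, hL₂e⟩ := exists_endsAtSigned (u := r) (hne L₂ hL₂v)
  rw [hL₁v] at hL₁e
  rw [hL₂v] at hL₂e
  by_cases hα : α₂ = α
  · subst hα
    obtain ⟨P, hP, hPe⟩ := hv (!α₂)
    exact hclean.false_of_ends_twice_opposite hL₁ hL₁e hL₂ hL₂e hd hP hPe
  · obtain rfl := Bool.eq_not_of_ne hα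
    exact hclean.not_intDisj_of_ends_opposite hL₁ hL₁e hL₂ hL₂e hd
end
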